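/- arXiv:1609.05505 — 4 statements merged into one kernel-verified Lean document; each statement's English description precedes it below -/
import Mathlib

section
/- Boundary value of A f(u) for the advection-reaction equation: Let f : ℝ → ℝ be differentiable at b ∈ ℝ, let a : ℝ → ℝ be differentiable at 0, and let u : ℝ → ℝ → ℝ. Assume that u s 0 = b for all s, that for each t the map x ↦ u t x is differentiable at 0, and that at the inflow boundary point the equation holds in the sense that s ↦ u s 0 has derivative d/dx[x ↦ a(x)·u(t,x)](0) + f(b) at s = t. Then d/dx[x ↦ a(x)·f(u(t,x))](0) = − f'(b)·f(b) + a'(0)·( f(b) − f'(b)·b ). -/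
/-!
Since `u(·, 0) ≡ b`, the time derivative vanishes at the boundary, so the equation gives
`∂ₓ(a u)(t, 0) = -f(b)`. The product and chain rules give the divergence-form identity
`∂ₓ(a f(u)) = f'(u) ∂ₓ(a u) + a' (f(u) - f'(u) u)`, and evaluating it at `x = 0`, where `u = b`,
yields the claim.
-/

theorem deriv_mul_comp_eq_deriv_mul_add {𝕜 : Type*} [NontriviallyNormedField 𝕜]
    {f a u : 𝕜 → 𝕜} {x : 𝕜} (hf : DifferentiableAt 𝕜 f (u x)) (ha : DifferentiableAt 𝕜 a x)
    (hu : DifferentiableAt 𝕜 u x) :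
    deriv (fun y => a y * f (u y)) x
      = deriv f (u x) * deriv (fun y => a y * u y) x
        + deriv a x * (f (u x) - deriv f (u x) * u x) := by
  have hfu : HasDerivAt (fun y => f (u y)) (deriv f (u x) * deriv u x) x :=
    hf.hasDerivAt.comp x hu.hasDerivAt
  rw [(ha.hasDerivAt.fun_mul hfu).deriv, deriv_fun_mul ha hu]
  ring

/-- Boundary value of `A f(u)` for the advection-reaction equation
`∂ₜu = ∂ₓ(a u) + f(u)` with inflow boundary condition `u(t,0) = b`:
`A f(u)|₀ = −f'(b) f(b) + a'(0) (f(b) − f'(b) b)`. -/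
theorem advection_reaction_boundary_Afu
    (f : ℝ → ℝ) (b : ℝ) (hf : DifferentiableAt ℝ f b)
    (a : ℝ → ℝ) (ha : DifferentiableAt ℝ a 0)
    (u : ℝ → ℝ → ℝ) (t : ℝ)
    (hb : ∀ s : ℝ, u s 0 = b)
    (hdiff : ∀ t' : ℝ, DifferentiableAt ℝ (u t') 0)
    (heq : HasDerivAt (fun s : ℝ => u s 0)
      (deriv (fun x : ℝ => a x * u t x) 0 + f b) t) :
    deriv (fun x : ℝ => a x * f (u t x)) 0
      = - deriv f b * f b + deriv a 0 * (f b - deriv f b * b) := by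
  have hconst : HasDerivAt (fun s : ℝ => u s 0) 0 t := by
    simpa only [hb] using hasDerivAt_const t b
  have hAu : deriv (fun x : ℝ => a x * u t x) 0 = -f b := by
    linarith [heq.unique hconst]
  rw [deriv_mul_comp_eq_deriv_mul_add (hb t ▸ hf) ha (hdiff t), hAu, hb t]
  ring
end

section
/- Boundary value of A f(u) for the diffusion-reaction equation: Let c ∈ ℝ, let f : ℝ → ℝ be twice continuously differentiable, b ∈ ℝ, and let u : ℝ → ℝ → ℝ be such that for each t the map x ↦ u t x is twice continuously differentiable. Assume that u s 0 = b for all s, and that at the boundary point the equation holds in the sense that s ↦ u s 0 has derivative c·(∂²ₓu)(t,0) + f(b) at s = t. Then c · d²/dx²[x ↦ f(u(t,x))](0) = c · f''(b) · ((∂ₓu)(t,0))² − f'(b)·f(b). -/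
/-! The boundary condition makes `s ↦ u s 0` constant, so its time derivative vanishes and the
equation at the boundary gives the compatibility condition `c u_xx(t,0) = -f(b)`. The chain rule
for second derivatives, `(f ∘ g)'' = f''(g) g'² + f'(g) g''`, evaluated at `x = 0` where
`u(t,0) = b`, then turns `c (f ∘ u)''` into the claimed expression. -/

theorem HasDerivAt.eq_zero_of_forall_eq {𝕜 F : Type*} [NontriviallyNormedField 𝕜]
    [NormedAddCommGroup F] [NormedSpace 𝕜 F] {φ : 𝕜 → F} {φ' b : F} {t : 𝕜}
    (hφ' : HasDerivAt φ φ' t) (hφ : ∀ s, φ s = b) : φ' = 0 :=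
  hφ'.unique (by simpa only [funext hφ] using hasDerivAt_const t b)

theorem diffusion_reaction_compatibility {c b t : ℝ} {f : ℝ → ℝ} {u : ℝ → ℝ → ℝ}
    (hb : ∀ s : ℝ, u s 0 = b)
    (heq : HasDerivAt (fun s : ℝ => u s 0) (c * iteratedDeriv 2 (u t) 0 + f b) t) :
    c * iteratedDeriv 2 (u t) 0 = -f b :=
  eq_neg_of_add_eq_zero_left (heq.eq_zero_of_forall_eq hb)

/-- Boundary value of `A f(u)` for the diffusion-reaction equation
`∂ₜu = c ∂ₓₓ u + f(u)` with boundary condition `u(t,0) = b`: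
`c (f∘u(t,·))''(0) = c f''(b) ((∂ₓu)(t,0))² − f'(b) f(b)`. -/
theorem diffusion_reaction_boundary_Afu
    (c : ℝ) (f : ℝ → ℝ) (hf : ContDiff ℝ 2 f) (b : ℝ)
    (u : ℝ → ℝ → ℝ) (t : ℝ)
    (hu : ∀ t' : ℝ, ContDiff ℝ 2 (u t'))
    (hb : ∀ s : ℝ, u s 0 = b)
    (heq : HasDerivAt (fun s : ℝ => u s 0)
      (c * iteratedDeriv 2 (u t) 0 + f b) t) :
    c * iteratedDeriv 2 (fun x : ℝ => f (u t x)) 0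
      = c * iteratedDeriv 2 f b * (deriv (u t) 0) ^ 2 - deriv f b * f b := by
  have hchain : iteratedDeriv 2 (f ∘ u t) 0
      = iteratedDeriv 2 f b * deriv (u t) 0 ^ 2 + deriv f b * iteratedDeriv 2 (u t) 0 := by
    rw [iteratedDeriv_comp_two hf.contDiffAt (hu t).contDiffAt, hb t]
  rw [← Function.comp_def, hchain]
  linear_combination deriv f b * diffusion_reaction_compatibility hb heq
end

section
/- Second-order accuracy of the TDBC boundary data: Let f : ℝ → ℝ be continuously differentiable, b ∈ ℝ, and u₀ : ℝ → ℝ with u₀(0) = b and u₀''(0) = −f(b). Let w : ℝ × ℝ → ℝ be four times continuously differentiable on [0,1] × [−1,1], with w(0,x) = u₀(x) and ∂ₜw(t,x) = f(w(t,x)) for all (t,x) ∈ [0,1] × [−1,1]. Then there exists C > 0 such that for all τ ∈ (0,1] and all s ∈ [0,τ]: | w(τ/2, 0) + s·(∂²ₓw)(τ/2, ·)(0) + (s²/2)·(∂⁴ₓw)(τ/2, ·)(0) − ( b + (τ/2 − s)·f(b) ) | ≤ C·τ². -/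
/-!
The error splits as
`(w(τ/2,0) - b - (τ/2) f(b)) + s (∂ₓ²w(τ/2,0) + f(b)) + (s²/2) ∂ₓ⁴w(τ/2,0)`.
The first term is the first-order Taylor remainder of `t ↦ w(t,0)`, whose slope at `t = 0` is
`f(w(0,0)) = f(b)`, so it is `O(τ²)`. By the compatibility condition `f(b) = -u₀''(0)`, the second
factor is `∂ₓ²w(τ/2,0) - ∂ₓ²w(0,0) = O(τ)`, and the third is bounded. All three constants come from
`w` being `C⁴` on the compact rectangle, once the `x`-derivatives of the slices `w(t,·)` are
identified with the iterated derivatives of `w` within the rectangle in the direction `(0,1)`.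
-/

open Set Filter Topology NNReal

section Calculus

variable {𝕜 E E' G : Type*} [NontriviallyNormedField 𝕜] [NormedAddCommGroup E] [NormedSpace 𝕜 E]
  [NormedAddCommGroup E'] [NormedSpace 𝕜 E'] [NormedAddCommGroup G] [NormedSpace 𝕜 G]

theorem iteratedDerivWithin_of_mem_nhds {n : ℕ} {f : 𝕜 → G} {s : Set 𝕜} {x : 𝕜} (hs : s ∈ 𝓝 x) :
    iteratedDerivWithin n f s x = iteratedDeriv n f x := by
  rw [← iteratedDerivWithin_univ, iteratedDerivWithin, iteratedDerivWithin,
    iteratedFDerivWithin_congr_set (eventuallyEq_univ.2 hs)]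

theorem ContDiffOn.iteratedFDerivWithin_apply_const {n m : WithTop ℕ∞} {k : ℕ} {F : E → G}
    {s : Set E} (hF : ContDiffOn 𝕜 n F s) (hs : UniqueDiffOn 𝕜 s) (hk : m + k ≤ n)
    (u : Fin k → E) : ContDiffOn 𝕜 m (fun p => iteratedFDerivWithin 𝕜 k F s p u) s :=
  (ContinuousMultilinearMap.apply 𝕜 (fun _ : Fin k => E) G u).contDiff.comp_contDiffOn
    fun p hp => (hF p hp).iteratedFDerivWithin_right hs hk hp

theorem ContDiffOn.comp_prodMk_const {n : WithTop ℕ∞} {F : E × E' → G} {s : Set E} {t : Set E'}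
    (hF : ContDiffOn 𝕜 n F (s ×ˢ t)) {y : E'} (hy : y ∈ t) :
    ContDiffOn 𝕜 n (fun x => F (x, y)) s :=
  hF.comp (contDiffOn_id.prodMk contDiffOn_const) fun _ hx => ⟨hx, hy⟩

end Calculus

section Slices

variable {E : Type*} [NormedAddCommGroup E] [NormedSpace ℝ E] {F : ℝ × ℝ → E} {I J : Set ℝ}
  {t x : ℝ}

theorem DifferentiableWithinAt.hasDerivWithinAt_fst_slice
    (hF : DifferentiableWithinAt ℝ F (I ×ˢ J) (t, x)) (hx : x ∈ J) :
    HasDerivWithinAt (fun s => F (s, x)) (fderivWithin ℝ F (I ×ˢ J) (t, x) (1, 0)) I t :=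
  hF.hasFDerivWithinAt.comp_hasDerivWithinAt t ((hasDerivWithinAt_id t I).prodMk
    (hasDerivWithinAt_const t I x)) fun s hs => show (s, x) ∈ I ×ˢ J from ⟨hs, hx⟩

theorem DifferentiableWithinAt.hasDerivWithinAt_snd_slice
    (hF : DifferentiableWithinAt ℝ F (I ×ˢ J) (t, x)) (ht : t ∈ I) :
    HasDerivWithinAt (fun y => F (t, y)) (fderivWithin ℝ F (I ×ˢ J) (t, x) (0, 1)) J x :=
  hF.hasFDerivWithinAt.comp_hasDerivWithinAt x ((hasDerivWithinAt_const x J t).prodMk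
    (hasDerivWithinAt_id x J)) fun _ hy => ⟨ht, hy⟩

theorem iteratedDerivWithin_snd_slice {n : WithTop ℕ∞} (hF : ContDiffOn ℝ n F (I ×ˢ J))
    (hI : UniqueDiffOn ℝ I) (hJ : UniqueDiffOn ℝ J) {k : ℕ} (hk : k ≤ n) (ht : t ∈ I)
    (hx : x ∈ J) :
    iteratedDerivWithin k (fun y => F (t, y)) J x =
      iteratedFDerivWithin ℝ k F (I ×ˢ J) (t, x) (fun _ => (0, 1)) := by
  induction k generalizing x with
  | zero => simp
  | succ k ih =>
    have hk' : (k : WithTop ℕ∞) < n := lt_of_lt_of_le (by exact_mod_cast k.lt_succ_self) hk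
    have hdiff : DifferentiableWithinAt ℝ (iteratedFDerivWithin ℝ k F (I ×ˢ J)) (I ×ˢ J) (t, x) :=
      hF.differentiableOn_iteratedFDerivWithin hk' (hI.prod hJ) _ ⟨ht, hx⟩
    rw [iteratedDerivWithin_succ, derivWithin_congr (fun y hy => ih hk'.le hy) (ih hk'.le hx),
      ((hdiff.continuousMultilinear_apply_const _).hasDerivWithinAt_snd_slice ht).derivWithin
        (hJ x hx), fderivWithin_continuousMultilinear_apply_const_apply ((hI.prod hJ) _ ⟨ht, hx⟩)
        hdiff]
    rfl

end Slices

section Interval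

variable {E : Type*} [NormedAddCommGroup E] [NormedSpace ℝ E] {a : ℝ}

theorem ContDiffOn.exists_norm_sub_left_le {h : ℝ → E} (hh : ContDiffOn ℝ 1 h (Icc 0 a)) :
    ∃ K : ℝ≥0, ∀ t ∈ Icc 0 a, ‖h t - h 0‖ ≤ K * t := by
  obtain ⟨K, hK⟩ := hh.exists_lipschitzOnWith one_ne_zero (convex_Icc 0 a) isCompact_Icc
  refine ⟨K, fun t ht => ?_⟩
  simpa [abs_of_nonneg ht.1] using hK.norm_sub_le ht (left_mem_Icc.2 (ht.1.trans ht.2))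

theorem norm_sub_sub_smul_le_of_norm_deriv_sub_le {g g' : ℝ → E} {K T : ℝ} (hK : 0 ≤ K)
    (hT : 0 ≤ T) (hg : ∀ t ∈ Icc 0 T, HasDerivWithinAt g (g' t) (Icc 0 T) t)
    (hg' : ∀ t ∈ Icc 0 T, ‖g' t - g' 0‖ ≤ K * t) :
    ‖g T - g 0 - T • g' 0‖ ≤ K * T ^ 2 := by
  have hlin (t : ℝ) : HasDerivWithinAt (fun t => t • g' 0) (g' 0) (Icc 0 T) t := by
    simpa using (hasDerivWithinAt_id t _).smul_const (g' 0)
  have h := (convex_Icc 0 T).norm_image_sub_le_of_norm_hasDerivWithin_le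
    (f := fun t => g t - t • g' 0) (C := K * T) (fun t ht => (hg t ht).sub (hlin t))
    (fun t ht => (hg' t ht).trans (mul_le_mul_of_nonneg_left ht.2 hK))
    (left_mem_Icc.2 hT) (right_mem_Icc.2 hT)
  simpa [Real.norm_of_nonneg hT, sq, mul_assoc, sub_right_comm] using h

theorem exists_norm_sub_sub_smul_le {g g' : ℝ → E}
    (hg : ∀ t ∈ Icc 0 a, HasDerivWithinAt g (g' t) (Icc 0 a) t)
    (hg' : ContDiffOn ℝ 1 g' (Icc 0 a)) :
    ∃ K : ℝ≥0, ∀ T ∈ Icc 0 a, ‖g T - g 0 - T • g' 0‖ ≤ K * T ^ 2 := by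
  obtain ⟨K, hK⟩ := hg'.exists_norm_sub_left_le
  have hsub {T : ℝ} (hT : T ∈ Icc 0 a) : Icc 0 T ⊆ Icc 0 a := Icc_subset_Icc_right hT.2
  exact ⟨K, fun T hT => norm_sub_sub_smul_le_of_norm_deriv_sub_le K.2 hT.1
    (fun t ht => (hg t (hsub hT ht)).mono (hsub hT)) (fun t ht => hK t (hsub hT ht))⟩

end Interval

section BoundaryTrace

variable {E : Type*} [NormedAddCommGroup E] [NormedSpace ℝ E] {w : ℝ × ℝ → E} {I J : Set ℝ}
  {a x : ℝ}

theorem iteratedDeriv_snd_slice {n : WithTop ℕ∞} (hw : ContDiffOn ℝ n w (I ×ˢ J))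
    (hI : UniqueDiffOn ℝ I) (hJ : UniqueDiffOn ℝ J) (hJx : J ∈ 𝓝 x) {k : ℕ} (hk : k ≤ n)
    {t : ℝ} (ht : t ∈ I) :
    iteratedDeriv k (fun y => w (t, y)) x =
      iteratedFDerivWithin ℝ k w (I ×ˢ J) (t, x) (fun _ => (0, 1)) := by
  rw [← iteratedDerivWithin_of_mem_nhds hJx]
  exact iteratedDerivWithin_snd_slice hw hI hJ hk ht (mem_of_mem_nhds hJx)

theorem ContDiffOn.exists_norm_iteratedDeriv_snd_le {k : ℕ} (hw : ContDiffOn ℝ k w (I ×ˢ J))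
    (hI : UniqueDiffOn ℝ I) (hIc : IsCompact I) (hJ : UniqueDiffOn ℝ J) (hJx : J ∈ 𝓝 x) :
    ∃ B, ∀ t ∈ I, ‖iteratedDeriv k (fun y => w (t, y)) x‖ ≤ B := by
  obtain ⟨B, hB⟩ := hIc.exists_bound_of_continuousOn ((hw.iteratedFDerivWithin_apply_const
    (m := 0) (hI.prod hJ) (zero_add _).le fun _ => (0, 1)).comp_prodMk_const
      (mem_of_mem_nhds hJx)).continuousOn
  exact ⟨B, fun t ht => iteratedDeriv_snd_slice hw hI hJ hJx le_rfl ht ▸ hB t ht⟩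

theorem ContDiffOn.exists_norm_iteratedDeriv_snd_sub_le {k : ℕ}
    (hw : ContDiffOn ℝ (k + 1) w (Icc 0 a ×ˢ J)) (ha : 0 < a) (hJ : UniqueDiffOn ℝ J)
    (hJx : J ∈ 𝓝 x) :
    ∃ K : ℝ≥0, ∀ t ∈ Icc 0 a, ‖iteratedDeriv k (fun y => w (t, y)) x -
      iteratedDeriv k (fun y => w (0, y)) x‖ ≤ K * t := by
  have hI := uniqueDiffOn_Icc ha
  have hk : (k : WithTop ℕ∞) ≤ k + 1 := le_self_add
  obtain ⟨K, hK⟩ := ((hw.iteratedFDerivWithin_apply_const (m := 1) (hI.prod hJ)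
    (add_comm _ _).le fun _ => (0, 1)).comp_prodMk_const
      (mem_of_mem_nhds hJx)).exists_norm_sub_left_le
  refine ⟨K, fun t ht => ?_⟩
  rw [iteratedDeriv_snd_slice hw hI hJ hJx hk ht,
    iteratedDeriv_snd_slice hw hI hJ hJx hk (left_mem_Icc.2 ha.le)]
  exact hK t ht

theorem ContDiffOn.exists_norm_sub_sub_smul_fst_le (hw : ContDiffOn ℝ 2 w (Icc 0 a ×ˢ J))
    (ha : 0 < a) (hJ : UniqueDiffOn ℝ J) (hx : x ∈ J) {v : E}
    (hv : HasDerivWithinAt (fun s => w (s, x)) v (Icc 0 a) 0) :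
    ∃ K : ℝ≥0, ∀ T ∈ Icc 0 a, ‖w (T, x) - w (0, x) - T • v‖ ≤ K * T ^ 2 := by
  have hI := uniqueDiffOn_Icc ha
  have hslope (t : ℝ) (ht : t ∈ Icc 0 a) := (hw.differentiableOn (by norm_num) _
    ⟨ht, hx⟩).hasDerivWithinAt_fst_slice hx
  obtain rfl := (hI 0 (left_mem_Icc.2 ha.le)).eq_deriv _ hv (hslope 0 (left_mem_Icc.2 ha.le))
  exact exists_norm_sub_sub_smul_le hslope (((hw.fderivWithin (hI.prod hJ) (m := 1)
    (by norm_num)).clm_apply contDiffOn_const).comp_prodMk_const hx)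

end BoundaryTrace

theorem abs_taylor_boundary_data_sub_le {x₀ c d β b A B D s τ : ℝ} (hs : 0 ≤ s) (hsτ : s ≤ τ)
    (hx₀ : |x₀ - (b + τ / 2 * β)| ≤ A * τ ^ 2) (hc : |c + β| ≤ B * τ) (hd : |d| ≤ D) :
    |x₀ + s * c + s ^ 2 / 2 * d - (b + (τ / 2 - s) * β)| ≤ (A + B + D / 2) * τ ^ 2 := by
  have hsc : |s * (c + β)| ≤ B * τ ^ 2 := by
    rw [abs_mul, abs_of_nonneg hs]
    nlinarith [abs_nonneg (c + β)]
  have hsd : |s ^ 2 / 2 * d| ≤ D / 2 * τ ^ 2 := by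
    rw [abs_mul, abs_of_nonneg (by positivity)]
    nlinarith [abs_nonneg d, mul_le_mul hsτ hsτ hs (hs.trans hsτ)]
  calc |x₀ + s * c + s ^ 2 / 2 * d - (b + (τ / 2 - s) * β)|
      = |(x₀ - (b + τ / 2 * β)) + s * (c + β) + s ^ 2 / 2 * d| := by ring_nf
    _ ≤ |x₀ - (b + τ / 2 * β)| + |s * (c + β)| + |s ^ 2 / 2 * d| := abs_add_three _ _ _
    _ ≤ (A + B + D / 2) * τ ^ 2 := by linarith

theorem tdbc_boundary_data_order2_general
    (f : ℝ → ℝ) (b : ℝ) (u₀ : ℝ → ℝ)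
    (hu₀0 : u₀ 0 = b) (hu₀2 : iteratedDeriv 2 u₀ 0 = -f b)
    (w : ℝ × ℝ → ℝ)
    (hw : ContDiffOn ℝ 4 w (Set.Icc (0 : ℝ) 1 ×ˢ Set.Icc (-1 : ℝ) 1))
    (hw0 : ∀ x ∈ Set.Icc (-1 : ℝ) 1, w (0, x) = u₀ x)
    (hwt : ∀ p ∈ Set.Icc (0 : ℝ) 1 ×ˢ Set.Icc (-1 : ℝ) 1,
      HasDerivAt (fun s : ℝ => w (s, p.2)) (f (w p)) p.1) :
    ∃ C : ℝ, 0 < C ∧ ∀ τ ∈ Set.Ioc (0 : ℝ) 1, ∀ s ∈ Set.Icc (0 : ℝ) τ,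
      |w (τ / 2, 0) + s * iteratedDeriv 2 (fun x : ℝ => w (τ / 2, x)) 0
          + (s ^ 2 / 2) * iteratedDeriv 4 (fun x : ℝ => w (τ / 2, x)) 0
          - (b + (τ / 2 - s) * f b)| ≤ C * τ ^ 2 := by
  have hJ : UniqueDiffOn ℝ (Icc (-1 : ℝ) 1) := uniqueDiffOn_Icc (by norm_num)
  have hJ0 : Icc (-1 : ℝ) 1 ∈ 𝓝 0 := Icc_mem_nhds (by norm_num) (by norm_num)
  have hx0 : (0 : ℝ) ∈ Icc (-1 : ℝ) 1 := mem_of_mem_nhds hJ0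
  obtain ⟨K₁, hK₁⟩ := (hw.of_le (by norm_num)).exists_norm_sub_sub_smul_fst_le one_pos hJ hx0
    (hwt (0, 0) ⟨left_mem_Icc.2 zero_le_one, hx0⟩).hasDerivWithinAt
  obtain ⟨K₂, hK₂⟩ := (hw.of_le (by norm_num)).exists_norm_iteratedDeriv_snd_sub_le (k := 2)
    one_pos hJ hJ0
  obtain ⟨B, hB⟩ := hw.exists_norm_iteratedDeriv_snd_le (k := 4) (uniqueDiffOn_Icc one_pos)
    isCompact_Icc hJ hJ0
  have hb : w (0, 0) = b := (hw0 0 hx0).trans hu₀0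
  have hcompat : iteratedDeriv 2 (fun x => w (0, x)) 0 = -f b :=
    ((eventuallyEq_of_mem hJ0 hw0).iteratedDeriv_eq 2).trans hu₀2
  refine ⟨K₁ / 4 + K₂ / 2 + max B 1 / 2, by positivity, fun τ hτ s hs => ?_⟩
  have hτ2 : τ / 2 ∈ Icc (0 : ℝ) 1 := ⟨by linarith [hτ.1], by linarith [hτ.2]⟩
  refine abs_taylor_boundary_data_sub_le hs.1 hs.2 ?_ ?_ ((hB _ hτ2).trans (le_max_left _ _))
  · have h := hK₁ _ hτ2
    rw [hb, Real.norm_eq_abs, smul_eq_mul, ← sub_add_eq_sub_sub] at h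
    exact h.trans_eq (by ring)
  · have h := hK₂ _ hτ2
    rw [hcompat, sub_neg_eq_add, Real.norm_eq_abs] at h
    exact h.trans_eq (by ring)

/-- Second-order accuracy of the TDBC boundary data: the Taylor-expansion boundary
values `V(s)|₀ = w(τ/2,0) + s ∂ₓₓw(τ/2,·)(0) + (s²/2) ∂ₓ⁴w(τ/2,·)(0)` agree with the
simplified data `V̄(s) = b + (τ/2 − s) f(b)` up to `O(τ²)`, uniformly for `0 ≤ s ≤ τ`. -/
theorem tdbc_boundary_data_order2
    (f : ℝ → ℝ) (hf : ContDiff ℝ 1 f) (b : ℝ) (u₀ : ℝ → ℝ)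
    (hu₀0 : u₀ 0 = b) (hu₀2 : iteratedDeriv 2 u₀ 0 = -f b)
    (w : ℝ × ℝ → ℝ)
    (hw : ContDiffOn ℝ 4 w (Set.Icc (0 : ℝ) 1 ×ˢ Set.Icc (-1 : ℝ) 1))
    (hw0 : ∀ x ∈ Set.Icc (-1 : ℝ) 1, w (0, x) = u₀ x)
    (hwt : ∀ p ∈ Set.Icc (0 : ℝ) 1 ×ˢ Set.Icc (-1 : ℝ) 1,
      HasDerivAt (fun s : ℝ => w (s, p.2)) (f (w p)) p.1) :
    ∃ C : ℝ, 0 < C ∧ ∀ τ ∈ Set.Ioc (0 : ℝ) 1, ∀ s ∈ Set.Icc (0 : ℝ) τ,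
      |w (τ / 2, 0) + s * iteratedDeriv 2 (fun x : ℝ => w (τ / 2, x)) 0
          + (s ^ 2 / 2) * iteratedDeriv 4 (fun x : ℝ => w (τ / 2, x)) 0
          - (b + (τ / 2 - s) * f b)| ≤ C * τ ^ 2 :=
  tdbc_boundary_data_order2_general f b u₀ hu₀0 hu₀2 w hw hw0 hwt
end

section
/- Third-order accuracy of the TDBC boundary data: Let f : ℝ → ℝ be twice continuously differentiable, b ∈ ℝ, and u₀ : ℝ → ℝ with u₀(0) = b, u₀''(0) = −f(b), and u₀''''(0) = −d²/dx²[x ↦ f(u₀(x))](0). Let w : ℝ × ℝ → ℝ be six times continuously differentiable on [0,1] × [−1,1], with w(0,x) = u₀(x) and ∂ₜw(t,x) = f(w(t,x)) for all (t,x) ∈ [0,1] × [−1,1]. Write d := d²/dx²[x ↦ f(u₀(x))](0). Then there exists C > 0 such that for all τ ∈ (0,1] and all s ∈ [0,τ]: | w(τ/2, 0) + s·(∂²ₓw)(τ/2, ·)(0) + (s²/2)·(∂⁴ₓw)(τ/2, ·)(0) − ( b + (τ/2)·f(b) + (τ²/8)·f'(b)·f(b) − s·f(b) + (s(τ−s)/2)·d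 ) | ≤ C·τ³. -/
/-!
Put `g(t) = w(t,0)`, `A(t) = ∂ₓ²w(t,0)` and `B(t) = ∂ₓ⁴w(t,0)`. Since `g' = f ∘ g`, the
third-order Taylor expansion of `g` is `g(τ/2) = b + (τ/2) f(b) + (τ²/8) f'(b) f(b) + O(τ³)`.
The compatibility conditions give `A(0) = -f(b)` and `B(0) = -d`, and since mixed partial
derivatives commute, `A'(0) = ∂ₓ²∂ₜw(0,0) = ∂ₓ²(f ∘ w)(0,0) = d`. Hence
`A(τ/2) = -f(b) + (τ/2) d + O(τ²)` and `B(τ/2) = -d + O(τ)`, and for `0 ≤ s ≤ τ` the error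
`(g(τ/2) - …) + s (A(τ/2) - …) + (s²/2) (B(τ/2) - …)` is `O(τ³)`.
-/

open Set Filter Topology

theorem abs_sub_le_mul_pow_succ_of_hasDerivWithinAt {F F' : ℝ → ℝ} {a M : ℝ} {k : ℕ}
    (hF : ∀ t ∈ Icc 0 a, HasDerivWithinAt F (F' t) (Icc 0 a) t)
    (hF' : ∀ t ∈ Icc 0 a, |F' t| ≤ M * t ^ k) {t : ℝ} (ht : t ∈ Icc 0 a) :
    |F t - F 0| ≤ M * t ^ (k + 1) := by
  rcases ht.1.eq_or_lt with rfl | ht₀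
  · simp
  have hM : 0 ≤ M :=
    nonneg_of_mul_nonneg_left ((abs_nonneg _).trans (hF' t ht)) (pow_pos ht₀ k)
  have := norm_image_sub_le_of_norm_deriv_le_segment' (C := M * t ^ k)
    (fun x hx => (hF x ⟨hx.1, hx.2.trans ht.2⟩).mono (Icc_subset_Icc_right ht.2))
    (fun x hx => (hF' x ⟨hx.1, hx.2.le.trans ht.2⟩).trans <| by gcongr; exacts [hx.1, hx.2.le])
    t ⟨ht.1, le_rfl⟩
  simpa [pow_succ, mul_assoc] using this

theorem abs_sub_sub_mul_le_mul_sq_of_hasDerivWithinAt {F F' : ℝ → ℝ} {a M : ℝ}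
    (hF : ∀ t ∈ Icc 0 a, HasDerivWithinAt F (F' t) (Icc 0 a) t)
    (hF' : ∀ t ∈ Icc 0 a, |F' t - F' 0| ≤ M * t) {t : ℝ} (ht : t ∈ Icc 0 a) :
    |F t - F 0 - t * F' 0| ≤ M * t ^ 2 := by
  have := abs_sub_le_mul_pow_succ_of_hasDerivWithinAt (k := 1)
    (F := fun t => F t - t * F' 0) (F' := fun t => F' t - F' 0)
    (fun x hx => (hF x hx).fun_sub (hasDerivAt_mul_const (F' 0)).hasDerivWithinAt)
    (by simpa using hF') ht
  simpa [sub_right_comm] using this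

theorem abs_taylor_three_le_of_hasDerivWithinAt {F F' F'' : ℝ → ℝ} {a M : ℝ}
    (hF : ∀ t ∈ Icc 0 a, HasDerivWithinAt F (F' t) (Icc 0 a) t)
    (hF' : ∀ t ∈ Icc 0 a, HasDerivWithinAt F' (F'' t) (Icc 0 a) t)
    (hF'' : ∀ t ∈ Icc 0 a, |F'' t - F'' 0| ≤ M * t) {t : ℝ} (ht : t ∈ Icc 0 a) :
    |F t - F 0 - t * F' 0 - t ^ 2 / 2 * F'' 0| ≤ M * t ^ 3 := by
  have hquad (x : ℝ) : HasDerivAt (fun s : ℝ => s * F' 0 + s ^ 2 / 2 * F'' 0)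
      (F' 0 + x * F'' 0) x := by
    simpa using ((hasDerivAt_id x).mul_const (F' 0)).fun_add
      (((hasDerivAt_pow 2 x).div_const 2).mul_const (F'' 0))
  have := abs_sub_le_mul_pow_succ_of_hasDerivWithinAt (k := 2)
    (F := fun t => F t - (t * F' 0 + t ^ 2 / 2 * F'' 0))
    (F' := fun t => F' t - (F' 0 + t * F'' 0))
    (fun x hx => (hF x hx).fun_sub (hquad x).hasDerivWithinAt)
    (fun x hx => by
      simpa [sub_sub] using abs_sub_sub_mul_le_mul_sq_of_hasDerivWithinAt hF' hF'' hx) ht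
  convert this using 2
  simp only [zero_mul, ne_eq, OfNat.ofNat_ne_zero, not_false_eq_true, zero_pow, zero_div,
    add_zero]
  ring

/-- Along a solution of `g' = f ∘ g` one has `g'' = (f' f) ∘ g`, and `g''' = (f' f)' ∘ g · f ∘ g`
is bounded because `f` is `C²`. -/
theorem exists_abs_taylor_three_le_of_hasDerivWithinAt_comp {f g : ℝ → ℝ}
    (hf : ContDiff ℝ 2 f) (hg : ∀ t ∈ Icc 0 1, HasDerivWithinAt g (f (g t)) (Icc 0 1) t) :
    ∃ M ≥ 0, ∀ t ∈ Icc 0 1,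
      |g t - g 0 - t * f (g 0) - t ^ 2 / 2 * (deriv f (g 0) * f (g 0))| ≤ M * t ^ 3 := by
  set h : ℝ → ℝ := fun y => deriv f y * f y
  have hh : ContDiff ℝ 1 h := hf.deriv'.mul (hf.of_le one_le_two)
  have hfg (t) (ht : t ∈ Icc (0 : ℝ) 1) :
      HasDerivWithinAt (fun s => f (g s)) (h (g t)) (Icc 0 1) t :=
    (hf.differentiable two_ne_zero _).hasDerivAt.comp_hasDerivWithinAt t (hg t ht)
  have hhg (t) (ht : t ∈ Icc (0 : ℝ) 1) :
      HasDerivWithinAt (fun s => h (g s)) (deriv h (g t) * f (g t)) (Icc 0 1) t :=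
    (hh.differentiable one_ne_zero _).hasDerivAt.comp_hasDerivWithinAt t (hg t ht)
  have hgc : ContinuousOn g (Icc 0 1) := fun t ht => (hg t ht).continuousWithinAt
  obtain ⟨M, hM⟩ := isCompact_Icc.exists_bound_of_continuousOn
    (((hh.continuous_deriv le_rfl).comp_continuousOn hgc).mul
      (hf.continuous.comp_continuousOn hgc))
  refine ⟨M, (norm_nonneg _).trans (hM 0 (left_mem_Icc.2 zero_le_one)), fun t ht => ?_⟩
  refine abs_taylor_three_le_of_hasDerivWithinAt hg hfg (fun s hs => ?_) ht
  simpa using abs_sub_le_mul_pow_succ_of_hasDerivWithinAt (k := 0) hhg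
    (fun r hr => by simpa using hM r hr) hs

theorem abs_add_mul_add_le {e₀ e₁ e₂ M₀ M₁ M₂ s τ : ℝ} (hs : s ∈ Icc 0 τ)
    (h₀ : |e₀| ≤ M₀ * (τ / 2) ^ 3) (h₁ : |e₁| ≤ M₁ * (τ / 2) ^ 2) (h₂ : |e₂| ≤ M₂ * (τ / 2)) :
    |e₀ + s * e₁ + s ^ 2 / 2 * e₂| ≤ (M₀ / 8 + M₁ / 4 + M₂ / 4) * τ ^ 3 := by
  obtain ⟨hs₀, hsτ⟩ := hs
  have h₁' : s * |e₁| ≤ τ * (M₁ * (τ / 2) ^ 2) :=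
    mul_le_mul hsτ h₁ (abs_nonneg _) (hs₀.trans hsτ)
  have h₂' : s ^ 2 / 2 * |e₂| ≤ τ ^ 2 / 2 * (M₂ * (τ / 2)) :=
    mul_le_mul (by gcongr) h₂ (abs_nonneg _) (by positivity)
  calc |e₀ + s * e₁ + s ^ 2 / 2 * e₂| ≤ |e₀| + s * |e₁| + s ^ 2 / 2 * |e₂| := by
        grw [abs_add_le, abs_add_le, abs_mul, abs_mul, abs_of_nonneg hs₀,
          abs_of_nonneg (by positivity : 0 ≤ s ^ 2 / 2)]
    _ ≤ _ := by linarith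

namespace TDBC

def rect : Set (ℝ × ℝ) := Icc 0 1 ×ˢ Icc (-1) 1

variable {E : Type*} [NormedAddCommGroup E] [NormedSpace ℝ E]

noncomputable def partialT (F : ℝ × ℝ → E) (p : ℝ × ℝ) : E := fderivWithin ℝ F rect p (1, 0)

noncomputable def partialX (F : ℝ × ℝ → E) (p : ℝ × ℝ) : E := fderivWithin ℝ F rect p (0, 1)

theorem uniqueDiffOn_rect : UniqueDiffOn ℝ rect :=
  (uniqueDiffOn_Icc zero_lt_one).prod (uniqueDiffOn_Icc (by norm_num))

theorem isCompact_rect : IsCompact rect := isCompact_Icc.prod isCompact_Icc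

theorem rect_subset_closure_interior : rect ⊆ closure (interior rect) := by
  rw [rect, interior_prod_eq, interior_Icc, interior_Icc, closure_prod_eq,
    closure_Ioo zero_ne_one, closure_Ioo (by norm_num)]

theorem contDiffOn_fderivWithin_rect_apply {F : ℝ × ℝ → E} {m n : WithTop ℕ∞}
    (hF : ContDiffOn ℝ m F rect) (hnm : n + 1 ≤ m) (v : ℝ × ℝ) :
    ContDiffOn ℝ n (fun p => fderivWithin ℝ F rect p v) rect :=
  (hF.fderivWithin uniqueDiffOn_rect hnm).clm_apply contDiffOn_const

theorem contDiffOn_iterate_partialX {m : WithTop ℕ∞} (k : ℕ) {F : ℝ × ℝ → E}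
    (hF : ContDiffOn ℝ (m + k) F rect) : ContDiffOn ℝ m (partialX^[k] F) rect := by
  induction k generalizing F with
  | zero => simpa using hF
  | succ k ih =>
    rw [Function.iterate_succ_apply]
    refine ih (contDiffOn_fderivWithin_rect_apply hF ?_ _)
    push_cast
    rw [add_assoc]

theorem hasDerivAt_partialX {F : ℝ × ℝ → E} (hF : DifferentiableOn ℝ F rect) {t x : ℝ}
    (ht : t ∈ Icc 0 1) (hx : x ∈ Ioo (-1) 1) :
    HasDerivAt (fun y => F (t, y)) (partialX F (t, x)) x := by
  have hmaps : MapsTo (fun y => (t, y)) (Ioo (-1) 1) rect :=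
    fun y hy => ⟨ht, Ioo_subset_Icc_self hy⟩
  exact ((hF _ (hmaps hx)).hasFDerivWithinAt.comp_hasDerivWithinAt x
    ((hasDerivAt_const x t).prodMk (hasDerivAt_id x)).hasDerivWithinAt hmaps).hasDerivAt
    (Ioo_mem_nhds hx.1 hx.2)

theorem hasDerivWithinAt_partialT {F : ℝ × ℝ → E} (hF : DifferentiableOn ℝ F rect)
    {t x : ℝ} (ht : t ∈ Icc 0 1) (hx : x ∈ Icc (-1) 1) :
    HasDerivWithinAt (fun s => F (s, x)) (partialT F (t, x)) (Icc 0 1) t :=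
  (hF _ ⟨ht, hx⟩).hasFDerivWithinAt.comp_hasDerivWithinAt t
    ((hasDerivAt_id t).prodMk (hasDerivAt_const t x)).hasDerivWithinAt fun _ hs => ⟨hs, hx⟩

theorem iteratedDeriv_eq_iterate_partialX (k : ℕ) {F : ℝ × ℝ → E}
    (hF : ContDiffOn ℝ k F rect) {t x : ℝ} (ht : t ∈ Icc 0 1) (hx : x ∈ Ioo (-1) 1)
    {u : ℝ → E} (hu : (fun y => F (t, y)) =ᶠ[𝓝 x] u) :
    iteratedDeriv k u x = partialX^[k] F (t, x) := by
  rw [← hu.iteratedDeriv_eq]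
  clear hu
  induction k generalizing F x with
  | zero => rfl
  | succ k ih =>
    have hderiv : deriv (fun y => F (t, y)) =ᶠ[𝓝 x] fun y => partialX F (t, y) :=
      eventually_of_mem (Ioo_mem_nhds hx.1 hx.2) fun y hy =>
        (hasDerivAt_partialX (hF.differentiableOn (by simp)) ht hy).deriv
    rw [iteratedDeriv_succ', hderiv.iteratedDeriv_eq, Function.iterate_succ_apply]
    exact ih (contDiffOn_fderivWithin_rect_apply hF (by push_cast; rfl) _) hx

theorem iterate_partialX_congr (k : ℕ) {F G : ℝ × ℝ → E} (h : EqOn F G rect) :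
    EqOn (partialX^[k] F) (partialX^[k] G) rect := by
  induction k with
  | zero => exact h
  | succ k ih =>
    intro p hp
    simp only [Function.iterate_succ_apply', partialX, fderivWithin_congr ih (ih hp)]

theorem fderivWithin_rect_apply {G : ℝ × ℝ → ℝ × ℝ →L[ℝ] E} {p : ℝ × ℝ}
    (hG : DifferentiableWithinAt ℝ G rect p) (hp : p ∈ rect) (u v : ℝ × ℝ) :
    fderivWithin ℝ (fun q => G q u) rect p v = fderivWithin ℝ G rect p v u := by
  rw [((hG.hasFDerivWithinAt.clm_apply (hasFDerivWithinAt_const u _ _)).fderivWithin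
    (uniqueDiffOn_rect p hp))]
  simp

/-- Symmetry of second derivatives holds up to the boundary of `rect`, by continuity from its
interior. -/
theorem partialT_partialX {F : ℝ × ℝ → E} (hF : ContDiffOn ℝ 2 F rect) {p : ℝ × ℝ}
    (hp : p ∈ rect) : partialT (partialX F) p = partialX (partialT F) p := by
  have hDF : DifferentiableWithinAt ℝ (fderivWithin ℝ F rect) rect p :=
    ((hF.fderivWithin uniqueDiffOn_rect (m := 1) (by norm_num)).differentiableOn
      one_ne_zero) p hp
  change fderivWithin ℝ (fun q => fderivWithin ℝ F rect q (0, 1)) rect p (1, 0)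
    = fderivWithin ℝ (fun q => fderivWithin ℝ F rect q (1, 0)) rect p (0, 1)
  rw [fderivWithin_rect_apply hDF hp, fderivWithin_rect_apply hDF hp]
  exact (hF.contDiffWithinAt hp).isSymmSndFDerivWithinAt (by simp) uniqueDiffOn_rect
    (rect_subset_closure_interior hp) hp _ _

theorem eqOn_partialT_iterate_partialX (k : ℕ) {F G : ℝ × ℝ → E}
    (hF : ContDiffOn ℝ (k + 1) F rect) (hG : EqOn (partialT F) G rect) :
    EqOn (partialT (partialX^[k] F)) (partialX^[k] G) rect := by
  induction k with
  | zero => exact hG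
  | succ k ih =>
    intro p hp
    have hk : ContDiffOn ℝ 2 (partialX^[k] F) rect :=
      contDiffOn_iterate_partialX k
        (hF.of_le (by push_cast; rw [add_assoc, one_add_one_eq_two, add_comm]))
    rw [Function.iterate_succ_apply', Function.iterate_succ_apply', partialT_partialX hk hp]
    exact iterate_partialX_congr 1 (ih (hF.of_le (by push_cast; norm_num))) hp

theorem exists_abs_sub_le_mul {F : ℝ × ℝ → ℝ} (hF : ContDiffOn ℝ 1 F rect) {x : ℝ}
    (hx : x ∈ Icc (-1) 1) : ∃ M ≥ 0, ∀ t ∈ Icc 0 1, |F (t, x) - F (0, x)| ≤ M * t := by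
  obtain ⟨M, hM⟩ := isCompact_rect.exists_bound_of_continuousOn
    (contDiffOn_fderivWithin_rect_apply hF (n := 0) (by norm_num) (1, 0)).continuousOn
  refine ⟨M, (norm_nonneg _).trans (hM (0, x) ⟨left_mem_Icc.2 zero_le_one, hx⟩),
    fun t ht => ?_⟩
  simpa using abs_sub_le_mul_pow_succ_of_hasDerivWithinAt (k := 0)
    (fun s hs => hasDerivWithinAt_partialT (hF.differentiableOn one_ne_zero) hs hx)
    (fun s hs => by simpa [partialT] using hM (s, x) ⟨hs, hx⟩) ht

theorem exists_abs_sub_sub_mul_le_mul_sq {F : ℝ × ℝ → ℝ} (hF : ContDiffOn ℝ 2 F rect)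
    {x : ℝ} (hx : x ∈ Icc (-1) 1) :
    ∃ M ≥ 0, ∀ t ∈ Icc 0 1, |F (t, x) - F (0, x) - t * partialT F (0, x)| ≤ M * t ^ 2 := by
  obtain ⟨M, hM, hbound⟩ :=
    exists_abs_sub_le_mul (contDiffOn_fderivWithin_rect_apply hF (by norm_num) (1, 0)) hx
  exact ⟨M, hM, fun t ht => abs_sub_sub_mul_le_mul_sq_of_hasDerivWithinAt
    (fun s hs => hasDerivWithinAt_partialT (hF.differentiableOn two_ne_zero) hs hx) hbound ht⟩

theorem exists_abs_iterate_partialX_sub_sub_le (k : ℕ) {F G : ℝ × ℝ → ℝ}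
    (hF : ContDiffOn ℝ (2 + k) F rect) (hG : EqOn (partialT F) G rect) {x : ℝ}
    (hx : x ∈ Icc (-1) 1) :
    ∃ M ≥ 0, ∀ t ∈ Icc 0 1,
      |partialX^[k] F (t, x) - partialX^[k] F (0, x) - t * partialX^[k] G (0, x)| ≤ M * t ^ 2 := by
  rw [← eqOn_partialT_iterate_partialX k (hF.of_le (by rw [add_comm]; gcongr; norm_num)) hG
    ⟨left_mem_Icc.2 zero_le_one, hx⟩]
  exact exists_abs_sub_sub_mul_le_mul_sq (contDiffOn_iterate_partialX k hF) hx

end TDBC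

open TDBC

/-- Third-order accuracy of the TDBC boundary data: the Taylor-expansion boundary
values `V(s)|₀ = w(τ/2,0) + s ∂ₓₓw(τ/2,·)(0) + (s²/2) ∂ₓ⁴w(τ/2,·)(0)` agree with the
corrected data `V̄(s) = b + (τ/2) f(b) + (τ²/8) f'(b) f(b) − s f(b) + (s(τ−s)/2) d`,
where `d = (f∘u₀)''(0)`, up to `O(τ³)`, uniformly for `0 ≤ s ≤ τ`. -/
theorem tdbc_boundary_data_order3
    (f : ℝ → ℝ) (hf : ContDiff ℝ 2 f) (b : ℝ) (u₀ : ℝ → ℝ)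
    (hu₀0 : u₀ 0 = b) (hu₀2 : iteratedDeriv 2 u₀ 0 = -f b)
    (hu₀4 : iteratedDeriv 4 u₀ 0 = -(iteratedDeriv 2 (fun x : ℝ => f (u₀ x)) 0))
    (w : ℝ × ℝ → ℝ)
    (hw : ContDiffOn ℝ 6 w (Set.Icc (0 : ℝ) 1 ×ˢ Set.Icc (-1 : ℝ) 1))
    (hw0 : ∀ x ∈ Set.Icc (-1 : ℝ) 1, w (0, x) = u₀ x)
    (hwt : ∀ p ∈ Set.Icc (0 : ℝ) 1 ×ˢ Set.Icc (-1 : ℝ) 1,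
      HasDerivAt (fun s : ℝ => w (s, p.2)) (f (w p)) p.1) :
    ∃ C : ℝ, 0 < C ∧ ∀ τ ∈ Set.Ioc (0 : ℝ) 1, ∀ s ∈ Set.Icc (0 : ℝ) τ,
      |w (τ / 2, 0) + s * iteratedDeriv 2 (fun x : ℝ => w (τ / 2, x)) 0
          + (s ^ 2 / 2) * iteratedDeriv 4 (fun x : ℝ => w (τ / 2, x)) 0
          - (b + (τ / 2) * f b + (τ ^ 2 / 8) * deriv f b * f b - s * f b
              + (s * (τ - s) / 2) * iteratedDeriv 2 (fun x : ℝ => f (u₀ x)) 0)|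
        ≤ C * τ ^ 3 := by
  have h0 : (0 : ℝ) ∈ Icc (-1) 1 := by norm_num
  have h0' : (0 : ℝ) ∈ Ioo (-1) 1 := by norm_num
  have h0t : (0 : ℝ) ∈ Icc 0 1 := by norm_num
  have hwu : (fun x => w (0, x)) =ᶠ[𝓝 0] u₀ :=
    eventually_of_mem (Icc_mem_nhds h0'.1 h0'.2) hw0
  have hPDE : EqOn (partialT w) (fun p => f (w p)) rect := fun p hp =>
    (uniqueDiffOn_Icc zero_lt_one _ hp.1).eq_deriv _
      (hasDerivWithinAt_partialT (hw.differentiableOn (by norm_num)) hp.1 hp.2)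
      (hwt p hp).hasDerivWithinAt
  have hA₀ := iteratedDeriv_eq_iterate_partialX 2 (hw.of_le (by norm_num)) h0t h0' hwu
  have hB₀ := iteratedDeriv_eq_iterate_partialX 4 (hw.of_le (by norm_num)) h0t h0' hwu
  have hd : iteratedDeriv 2 (fun x => f (u₀ x)) 0 = partialX^[2] (fun p => f (w p)) (0, 0) :=
    iteratedDeriv_eq_iterate_partialX 2 (hf.comp_contDiffOn (hw.of_le (by norm_num))) h0t h0'
      (hwu.fun_comp f)
  obtain ⟨M₀, hM₀, hg⟩ := exists_abs_taylor_three_le_of_hasDerivWithinAt_comp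
    (g := fun t => w (t, 0)) hf fun t ht => (hwt (t, 0) ⟨ht, h0⟩).hasDerivWithinAt
  obtain ⟨M₁, hM₁, hA⟩ :=
    exists_abs_iterate_partialX_sub_sub_le 2 (hw.of_le (by norm_num)) hPDE h0
  obtain ⟨M₂, hM₂, hB⟩ :=
    exists_abs_sub_le_mul (contDiffOn_iterate_partialX 4 (hw.of_le (by norm_num))) h0
  refine ⟨M₀ / 8 + M₁ / 4 + M₂ / 4 + 1, by positivity, fun τ hτ s hs => ?_⟩
  obtain ⟨hτ₀, hτ₁⟩ := hτ
  have hτ2 : τ / 2 ∈ Icc (0 : ℝ) 1 := ⟨by linarith, by linarith⟩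
  rw [iteratedDeriv_eq_iterate_partialX 2 (hw.of_le (by norm_num)) hτ2 h0' EventuallyEq.rfl,
    iteratedDeriv_eq_iterate_partialX 4 (hw.of_le (by norm_num)) hτ2 h0' EventuallyEq.rfl, hd]
  have key := abs_add_mul_add_le hs (hg _ hτ2) (hA _ hτ2) (hB _ hτ2)
  rw [hw0 0 h0, hu₀0, ← hA₀, ← hB₀, hu₀2, hu₀4, hd] at key
  calc _ = _ := by congr 1; ring
    _ ≤ _ := key
    _ ≤ _ := by gcongr ?_ * _; linarith
end
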